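/- Let c ∈ ℝ^{I×I} be symmetric nonnegative definite, p an orthogonal projection matrix in ℝ^{I×I}, and κ ∈ ℝ^{I×I} symmetric nonnegative definite. Then tr(c_{pp}^† p c κ c p) ≤ tr(κ c), where c_{pp} := p c p and † denotes the Moore–Penrose pseudoinverse. -/

import Mathlib

open Matrix

/-- `d` is the Moore–Penrose pseudoinverse of `m` (the four Penrose conditions). -/
def IsMoorePenrose {I : Type*} [Fintype I] [DecidableEq I]
    (m d : Matrix I I ℝ) : Prop :=
  m * d * m = m ∧ d * m * d = d ∧ (m * d)ᵀ = m * d ∧ (d * m)ᵀ = d * m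

/-!
The map `q ↦ tr(κ q)` is monotone for the Loewner order when `κ ≥ 0`, so it suffices to show
`c c_{pp}^† c ≤ c`, with `d := c_{pp}^†`; the projection `p` drops out because `p d = d = d p`,
which also gives `d c d = d`. Writing `c = sᴴ s`, the matrix `s d sᴴ` is then an orthogonal
projection, hence `≤ 1`, and conjugating by `s` gives `c d c = sᴴ (s d sᴴ) s ≤ sᴴ s = c`.
-/

theorem mul_mul_le_self_of_mul_mul_eq_self {R : Type*} [Ring R] [PartialOrder R] [StarRing R]
    [StarOrderedRing R] {c d s : R} (hc : star s * s = c) (hd : IsSelfAdjoint d)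
    (hdcd : d * c * d = d) : c * d * c ≤ c := by
  have hq : IsStarProjection (s * d * star s) := by
    refine ⟨?_, ?_⟩
    · calc s * d * star s * (s * d * star s) = s * (d * (star s * s) * d) * star s := by
            simp only [mul_assoc]
        _ = s * d * star s := by rw [hc, hdcd]
    · simp only [IsSelfAdjoint, star_mul, star_star, hd.star_eq, mul_assoc]
  have hsub : c - c * d * c = star s * (1 - s * d * star s) * s := by
    rw [← hc]; noncomm_ring
  exact sub_nonneg.mp (hsub ▸ star_left_conjugate_nonneg hq.one_sub_nonneg s)

namespace Matrix

open scoped MatrixOrder ComplexOrder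

variable {𝕜 n : Type*} [RCLike 𝕜] [Fintype n] [DecidableEq n]

theorem PosSemidef.mul_mul_le_self_of_mul_mul_eq_self {c d : Matrix n n 𝕜} (hc : c.PosSemidef)
    (hd : d.IsHermitian) (hdcd : d * c * d = d) : c * d * c ≤ c := by
  obtain ⟨s, hs⟩ := CStarAlgebra.nonneg_iff_eq_star_mul_self.mp hc.nonneg
  exact _root_.mul_mul_le_self_of_mul_mul_eq_self hs.symm hd hdcd

theorem PosSemidef.trace_mul_le_trace_mul {κ a b : Matrix n n 𝕜} (hκ : κ.PosSemidef)
    (hab : a ≤ b) : (κ * a).trace ≤ (κ * b).trace := by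
  obtain ⟨r, rfl⟩ := CStarAlgebra.nonneg_iff_eq_star_mul_self.mp hκ.nonneg
  have h := ((le_iff.mp hab).mul_mul_conjTranspose_same r).trace_nonneg
  rwa [trace_mul_cycle, ← star_eq_conjTranspose, mul_sub, trace_sub, sub_nonneg] at h

end Matrix

namespace IsMoorePenrose

variable {I : Type*} [Fintype I] [DecidableEq I] {m d e : Matrix I I ℝ}

theorem transpose (hd : IsMoorePenrose m d) : IsMoorePenrose mᵀ dᵀ := by
  obtain ⟨h₁, h₂, h₃, h₄⟩ := hd
  refine ⟨?_, ?_, ?_, ?_⟩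
  · simpa only [transpose_mul, mul_assoc] using congrArg Matrix.transpose h₁
  · simpa only [transpose_mul, mul_assoc] using congrArg Matrix.transpose h₂
  · rw [← transpose_mul, transpose_transpose, h₄]
  · rw [← transpose_mul, transpose_transpose, h₃]

theorem unique (hd : IsMoorePenrose m d) (he : IsMoorePenrose m e) : d = e := by
  obtain ⟨d₁, d₂, d₃, d₄⟩ := hd
  obtain ⟨e₁, e₂, e₃, e₄⟩ := he
  have hmd : m * d = m * e := by
    calc m * d = (m * e * m * d)ᵀ := by rw [e₁, d₃]
      _ = (m * d)ᵀ * (m * e)ᵀ := by rw [← transpose_mul, mul_assoc (m * e)]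
      _ = m * e := by rw [d₃, e₃, ← mul_assoc, d₁]
  have hdm : d * m = e * m := by
    calc d * m = (d * m * e * m)ᵀ := by simp only [mul_assoc]; rw [← mul_assoc m e m, e₁, d₄]
      _ = (e * m)ᵀ * (d * m)ᵀ := by rw [← transpose_mul]; simp only [mul_assoc]
      _ = e * m := by rw [d₄, e₄, mul_assoc, ← mul_assoc m, d₁]
  calc d = d * m * d := d₂.symm
    _ = e * m * e := by rw [hdm, mul_assoc, hmd, ← mul_assoc]
    _ = e := e₂

theorem transpose_eq_self (hd : IsMoorePenrose m d) (hm : mᵀ = m) : dᵀ = d :=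
  (hm ▸ hd.transpose).unique hd

theorem mul_eq_self_of_mul_transpose_eq (hd : IsMoorePenrose m d) {q : Matrix I I ℝ}
    (hq : q * mᵀ = mᵀ) : q * d = d := by
  obtain ⟨-, h₂, -, h₄⟩ := hd
  have hd' : mᵀ * dᵀ * d = d := by rw [← transpose_mul, h₄, h₂]
  rw [← hd', ← mul_assoc, ← mul_assoc, hq]

theorem mul_eq_self_of_transpose_mul_eq (hd : IsMoorePenrose m d) {q : Matrix I I ℝ}
    (hq : mᵀ * q = mᵀ) : d * q = d := by
  obtain ⟨-, h₂, h₃, -⟩ := hd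
  have hd' : d * dᵀ * mᵀ = d := by rw [mul_assoc, ← transpose_mul, h₃, ← mul_assoc, h₂]
  rw [← hd', mul_assoc, hq]

end IsMoorePenrose

/-- Trace inequality form: for `c`, `κ` symmetric nonnegative definite, `p` an
orthogonal projection, and `c_{pp}† ` the pseudoinverse of `c_{pp} := p c p`,
one has `tr(c_{pp}† p c κ c p) ≤ tr(κ c)`. -/
theorem stmt3 {I : Type*} [Fintype I] [DecidableEq I]
    (c p κ d : Matrix I I ℝ) (hc : c.PosSemidef) (hκ : κ.PosSemidef)
    (hp_proj : p * p = p) (hp_symm : pᵀ = p)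
    (hd : IsMoorePenrose (p * c * p) d) :
    (d * p * c * κ * c * p).trace ≤ (κ * c).trace := by
  have hcs : cᵀ = c := by
    simpa only [conjTranspose_eq_transpose_of_trivial] using hc.isHermitian.eq
  have hm : (p * c * p)ᵀ = p * c * p := by simp only [transpose_mul, hp_symm, hcs, mul_assoc]
  have hpd : p * d = d :=
    hd.mul_eq_self_of_mul_transpose_eq (by rw [hm, ← mul_assoc, ← mul_assoc, hp_proj])
  have hdp : d * p = d := hd.mul_eq_self_of_transpose_mul_eq (by rw [hm, mul_assoc, hp_proj])
  have hdcd : d * c * d = d := by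
    calc d * c * d = d * (p * c * p) * d := by
          simp only [← mul_assoc, hdp]; rw [mul_assoc (d * c) p d, hpd]
      _ = d := hd.2.1
  have hdh : d.IsHermitian := by
    simpa only [IsHermitian, conjTranspose_eq_transpose_of_trivial] using hd.transpose_eq_self hm
  calc (d * p * c * κ * c * p).trace = (κ * (c * d * c)).trace := by
        rw [hdp, trace_mul_comm]
        simp only [← mul_assoc, hpd]
        rw [trace_mul_comm, ← mul_assoc, ← mul_assoc, trace_mul_comm]
        simp only [mul_assoc]
    _ ≤ (κ * c).trace :=
      hκ.trace_mul_le_trace_mul (hc.mul_mul_le_self_of_mul_mul_eq_self hdh hdcd)
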